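/- arXiv:2508.08838 — 6 statements merged into one kernel-verified Lean document; each statement's English description precedes it below -/
import Mathlib

section
/- Let X be a Banach algebra and I a closed two-sided ideal of X possessing an approximate identity. Then the center of I equals I ∩ Z(X), i.e. Z(I) = I ∩ Z(X). -/
/-- If `I` is a closed two-sided ideal of a Banach algebra `X`
possessing an approximate identity, then `Z(I) = I ∩ Z(X)`. -/
theorem center_of_ideal_with_approx_identity
    {X : Type*} [NonUnitalNormedRing X] [NormedSpace ℂ X] [CompleteSpace X]
    [IsScalarTower ℂ X X] [SMulCommClass ℂ X X]
    (I : TwoSidedIdeal X) (hI : IsClosed (I : Set X))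
    (happrox : ∃ (ι : Type) (l : Filter ι) (e : ι → X), l.NeBot ∧ (∀ i, e i ∈ I) ∧
      ∀ a ∈ I, Filter.Tendsto (fun i => e i * a) l (nhds a) ∧
        Filter.Tendsto (fun i => a * e i) l (nhds a)) :
    {a : X | a ∈ I ∧ ∀ b ∈ I, a * b = b * a} =
      {a : X | a ∈ I ∧ ∀ x : X, a * x = x * a} := by
  obtain ⟨ι, l, e, hne, heI, he⟩ := happrox
  ext a
  simp only [Set.mem_setOf_eq]
  constructor
  · rintro ⟨haI, hcomm⟩
    refine ⟨haI, fun x => ?_⟩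
    have h1 : Filter.Tendsto (fun i => (a * e i) * x) l (nhds (a * x)) :=
      ((he a haI).2.mul_const x)
    have h2 : Filter.Tendsto (fun i => e i * (x * a)) l (nhds (x * a)) :=
      (he (x * a) (I.mul_mem_left x a haI)).1
    have heq : (fun i => (a * e i) * x) = fun i => e i * (x * a) := by
      funext i
      rw [mul_assoc, hcomm _ (I.mul_mem_right (e i) x (heI i)), mul_assoc]
    rw [heq] at h1
    exact tendsto_nhds_unique h1 h2
  · rintro ⟨haI, hcomm⟩
    exact ⟨haI, fun b _ => hcomm b⟩
end

section
/- A Banach algebra X is weakly central if (1) no maximal modular ideal of X contains Z(X), and (2) for each pair of maximal modular ideals M₁, M₂ of X, M₁ ∩ Z(X) = M₂ ∩ Z(X) implies M₁ = M₂. Prove: if X is weakly central, then every quotient X/I by a closed two-sided ideal I is weakly central. -/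
noncomputable section

def centerSet (X : Type*) [NonUnitalRing X] : Set X := {z | ∀ x : X, z * x = x * z}

def TwoSidedIdeal.IsModular {X : Type*} [NonUnitalRing X] (M : TwoSidedIdeal X) : Prop :=
  ∃ u : X, ∀ x : X, x * u - x ∈ M ∧ u * x - x ∈ M

def TwoSidedIdeal.IsMaxMod {X : Type*} [NonUnitalRing X] (M : TwoSidedIdeal X) : Prop :=
  M.IsModular ∧ M ≠ ⊤ ∧ ∀ N : TwoSidedIdeal X, M ≤ N → N ≠ ⊤ → N = M

def WeaklyCentral (X : Type*) [NonUnitalRing X] : Prop :=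
  (∀ M : TwoSidedIdeal X, M.IsMaxMod → ¬ centerSet X ⊆ (M : Set X)) ∧
  ∀ M N : TwoSidedIdeal X, M.IsMaxMod → N.IsMaxMod →
    (M : Set X) ∩ centerSet X = (N : Set X) ∩ centerSet X → M = N


namespace WCQuot

variable {X : Type*} [NonUnitalRing X] (I : TwoSidedIdeal X)

lemma surj (y : I.ringCon.Quotient) : ∃ x : X, (x : I.ringCon.Quotient) = y :=
  Quot.exists_rep y

/-- Pullback of a two-sided ideal of the quotient. -/
def pull (M' : TwoSidedIdeal I.ringCon.Quotient) : TwoSidedIdeal X :=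
  TwoSidedIdeal.mk' {x | (x : I.ringCon.Quotient) ∈ M'}
    (by show ((0 : X) : I.ringCon.Quotient) ∈ M'; rw [I.ringCon.coe_zero]; exact M'.zero_mem)
    (fun {x y} hx hy => by
      show ((x + y : X) : I.ringCon.Quotient) ∈ M'
      rw [I.ringCon.coe_add]; exact M'.add_mem hx hy)
    (fun {x} hx => by
      show ((-x : X) : I.ringCon.Quotient) ∈ M'
      rw [I.ringCon.coe_neg]; exact M'.neg_mem hx)
    (fun {x y} hy => by
      show ((x * y : X) : I.ringCon.Quotient) ∈ M'
      rw [I.ringCon.coe_mul]; exact M'.mul_mem_left _ _ hy)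
    (fun {x y} hx => by
      show ((x * y : X) : I.ringCon.Quotient) ∈ M'
      rw [I.ringCon.coe_mul]; exact M'.mul_mem_right _ _ hx)

@[simp] lemma mem_pull {M' : TwoSidedIdeal I.ringCon.Quotient} {x : X} :
    x ∈ pull I M' ↔ (x : I.ringCon.Quotient) ∈ M' := by
  simp [pull]

/-- Pushforward of a two-sided ideal along the quotient map. -/
def push (N : TwoSidedIdeal X) : TwoSidedIdeal I.ringCon.Quotient :=
  TwoSidedIdeal.mk' {y | ∃ x ∈ N, (x : I.ringCon.Quotient) = y}
    ⟨0, N.zero_mem, I.ringCon.coe_zero⟩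
    (fun {a b} ⟨x, hx, hxa⟩ ⟨y, hy, hyb⟩ =>
      ⟨x + y, N.add_mem hx hy, by rw [I.ringCon.coe_add, hxa, hyb]⟩)
    (fun {a} ⟨x, hx, hxa⟩ => ⟨-x, N.neg_mem hx, by rw [I.ringCon.coe_neg, hxa]⟩)
    (fun {a b} ⟨y, hy, hyb⟩ => by
      obtain ⟨x, hxa⟩ := surj I a
      exact ⟨x * y, N.mul_mem_left _ _ hy, by rw [I.ringCon.coe_mul, hxa, hyb]⟩)
    (fun {a b} ⟨x, hx, hxa⟩ => by
      obtain ⟨y, hyb⟩ := surj I b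
      exact ⟨x * y, N.mul_mem_right _ _ hx, by rw [I.ringCon.coe_mul, hxa, hyb]⟩)

@[simp] lemma mem_push {N : TwoSidedIdeal X} {y : I.ringCon.Quotient} :
    y ∈ push I N ↔ ∃ x ∈ N, (x : I.ringCon.Quotient) = y := by
  simp [push]

lemma push_pull (M' : TwoSidedIdeal I.ringCon.Quotient) : push I (pull I M') = M' := by
  refine SetLike.ext fun y => ?_
  rw [mem_push]
  constructor
  · rintro ⟨x, hx, rfl⟩; exact (mem_pull I).1 hx
  · intro hy
    obtain ⟨x, rfl⟩ := surj I y
    exact ⟨x, (mem_pull I).2 hy, rfl⟩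

lemma I_le_pull (M' : TwoSidedIdeal I.ringCon.Quotient) : ∀ x ∈ I, x ∈ pull I M' := by
  intro x hx
  rw [mem_pull]
  have : (x : I.ringCon.Quotient) = ((0 : X) : I.ringCon.Quotient) :=
    I.ringCon.eq.2 (by rw [I.rel_iff]; simpa using hx)
  rw [this, I.ringCon.coe_zero]
  exact M'.zero_mem

lemma pull_push {N : TwoSidedIdeal X} (hIN : ∀ x ∈ I, x ∈ N) : pull I (push I N) = N := by
  refine SetLike.ext fun x => ?_
  rw [mem_pull, mem_push]
  constructor
  · rintro ⟨b, hb, hbx⟩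
    have hbx' : b - x ∈ I := (I.rel_iff b x).1 (I.ringCon.eq.1 hbx)
    have := N.sub_mem hb (hIN _ hbx')
    simpa using this
  · intro hx; exact ⟨x, hx, rfl⟩

lemma pull_maxMod {M' : TwoSidedIdeal I.ringCon.Quotient} (h : M'.IsMaxMod) :
    (pull I M').IsMaxMod := by
  obtain ⟨⟨u', hu'⟩, hne, hmax⟩ := h
  obtain ⟨u, rfl⟩ := surj I u'
  refine ⟨⟨u, fun x => ?_⟩, ?_, ?_⟩
  · constructor
    · rw [mem_pull, I.ringCon.coe_sub, I.ringCon.coe_mul]; exact (hu' x).1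
    · rw [mem_pull, I.ringCon.coe_sub, I.ringCon.coe_mul]; exact (hu' x).2
  · intro heq
    apply hne
    rw [← push_pull I M', heq]
    refine SetLike.ext fun y => ?_
    simp only [mem_push, TwoSidedIdeal.mem_top, iff_true]
    obtain ⟨x, rfl⟩ := surj I y
    exact ⟨x, trivial, rfl⟩
  · intro N hMN hNtop
    have hIN : ∀ x ∈ I, x ∈ N := fun x hx => hMN (I_le_pull I M' x hx)
    have h1 : M' ≤ push I N := by
      intro y hy
      rw [← push_pull I M'] at hy
      rw [mem_push] at hy ⊢
      obtain ⟨x, hx, rfl⟩ := hy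
      exact ⟨x, hMN hx, rfl⟩
    have h2 : push I N ≠ ⊤ := by
      intro heq
      apply hNtop
      rw [← pull_push I hIN, heq]
      refine SetLike.ext fun x => ?_
      simp [TwoSidedIdeal.mem_top]
    have := hmax _ h1 h2
    rw [← pull_push I hIN, this]

lemma coe_center_mem {z : X} (hz : z ∈ centerSet X) :
    (z : I.ringCon.Quotient) ∈ centerSet I.ringCon.Quotient := by
  intro y
  obtain ⟨x, rfl⟩ := surj I y
  rw [← I.ringCon.coe_mul, ← I.ringCon.coe_mul, hz x]

end WCQuot

/-- Every quotient of a weakly central Banach algebra by a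
closed two-sided ideal is weakly central. -/
theorem weaklyCentral_quotient
    {X : Type*} [NonUnitalNormedRing X] [NormedSpace ℂ X] [CompleteSpace X]
    [IsScalarTower ℂ X X] [SMulCommClass ℂ X X]
    (hX : WeaklyCentral X) (I : TwoSidedIdeal X) (hI : IsClosed (I : Set X)) :
    WeaklyCentral I.ringCon.Quotient := by
  constructor
  · intro M' hM' hsub
    refine hX.1 (WCQuot.pull I M') (WCQuot.pull_maxMod I hM') ?_
    intro z hz
    rw [SetLike.mem_coe, WCQuot.mem_pull]
    exact hsub (WCQuot.coe_center_mem I hz)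
  · intro M' N' hM' hN' heq
    have hMN : WCQuot.pull I M' = WCQuot.pull I N' := by
      refine hX.2 _ _ (WCQuot.pull_maxMod I hM') (WCQuot.pull_maxMod I hN') ?_
      ext z
      simp only [Set.mem_inter_iff, SetLike.mem_coe, WCQuot.mem_pull]
      constructor
      · rintro ⟨hz1, hz2⟩
        have : (z : I.ringCon.Quotient) ∈ (N' : Set _) ∩ centerSet _ :=
          heq ▸ ⟨hz1, WCQuot.coe_center_mem I hz2⟩
        exact ⟨this.1, hz2⟩
      · rintro ⟨hz1, hz2⟩
        have : (z : I.ringCon.Quotient) ∈ (M' : Set _) ∩ centerSet _ :=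
          heq.symm ▸ ⟨hz1, WCQuot.coe_center_mem I hz2⟩
        exact ⟨this.1, hz2⟩
    rw [← WCQuot.push_pull I M', ← WCQuot.push_pull I N', hMN]
end
end

section
/- Let X be a non-unital Banach *-algebra and X̃ its unitization. Then X is weakly central if and only if X̃ is weakly central. -/
/-!
The maximal modular ideals of `X̃ = 𝕜 ⊕ X` are `X` and the ideals `M̃ = {(λ, x) | x + λ • u ∈ M}`
for `M` maximal modular in `X` with modular unit `u`, and restriction to `X` inverts `M ↦ M̃`.
Since `Z(X̃) = 𝕜 ⊕ Z(X)` contains `1`, the first condition of weak centrality is automatic for `X̃`,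
while for `X` it says that no `M̃` has the same central part as `X`. The second condition transfers
along `M ↦ M̃`: if `c` is central and `c + u_M ∈ M`, then `c * c + c` is a central element of `M`,
hence of `N`, so `-c` is a central idempotent modulo `N` and `c + u_N ∈ N` (the alternative
`c ∈ N` would force `u_M ∈ M`).
-/

noncomputable section

section CenterSet

variable {X : Type*} [NonUnitalRing X] {c : X}

lemma one_mem_centerSet {R : Type*} [Ring R] : (1 : R) ∈ centerSet R := fun x => by
  rw [one_mul, mul_one]

lemma mul_self_add_mem_centerSet (hc : c ∈ centerSet X) : c * c + c ∈ centerSet X := fun x => by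
  rw [add_mul, mul_add, hc x, mul_assoc, hc x, ← mul_assoc, hc x, mul_assoc]

lemma smul_mem_centerSet {R : Type*} [SMul R X] [IsScalarTower R X X] [SMulCommClass R X X]
    (hc : c ∈ centerSet X) (r : R) : r • c ∈ centerSet X := fun x => by
  rw [smul_mul_assoc, mul_smul_comm, hc x]

end CenterSet

namespace TwoSidedIdeal

variable {X : Type*} [NonUnitalRing X] {M N : TwoSidedIdeal X} {u v c : X}

def IsModularUnit (M : TwoSidedIdeal X) (u : X) : Prop :=
  ∀ x : X, x * u - x ∈ M ∧ u * x - x ∈ M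

lemma isModular_of_ring {R : Type*} [Ring R] (M : TwoSidedIdeal R) : M.IsModular :=
  ⟨1, fun x => by simp [M.zero_mem]⟩

namespace IsModularUnit

lemma mono (hu : M.IsModularUnit u) (h : M ≤ N) : N.IsModularUnit u :=
  fun x => ⟨h (hu x).1, h (hu x).2⟩

lemma eq_top_of_mem (hu : M.IsModularUnit u) (h : u ∈ M) : M = ⊤ :=
  eq_top_iff.mpr fun x _ => by simpa using M.sub_mem (M.mul_mem_left x u h) (hu x).1

lemma sub_mem (hu : M.IsModularUnit u) (hv : M.IsModularUnit v) : u - v ∈ M := by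
  simpa using M.sub_mem (hu v).2 (hv u).1

lemma smul_mem {R : Type*} [SMul R X] [IsScalarTower R X X] [SMulCommClass R X X]
    (hu : M.IsModularUnit u) {m : X} (hm : m ∈ M) (r : R) : r • m ∈ M := by
  have key : r • m = m * (r • u) - ((r • m) * u - r • m) := by
    rw [mul_smul_comm, smul_mul_assoc]; abel
  exact key ▸ M.sub_mem (M.mul_mem_right m _ hm) (hu (r • m)).1

lemma add_smul_mem_iff {R : Type*} [Monoid R] [DistribMulAction R X] [IsScalarTower R X X]
    [SMulCommClass R X X]
    (hu : M.IsModularUnit u) (hv : M.IsModularUnit v) (x : X) (r : R) :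
    x + r • u ∈ M ↔ x + r • v ∈ M := by
  have key : x + r • u = x + r • v + r • (u - v) := by rw [smul_sub]; abel
  rw [key, add_mem_cancel_right (hu.smul_mem (hu.sub_mem hv) r)]

end IsModularUnit

lemma IsMaxMod.not_mem (hM : M.IsMaxMod) (hu : M.IsModularUnit u) : u ∉ M :=
  fun h => hM.2.1 (hu.eq_top_of_mem h)

/-- The colon ideal `(N : c + 1)`, written without a unit. -/
def colonAddOne (N : TwoSidedIdeal X) (hc : c ∈ centerSet X) : TwoSidedIdeal X :=
  .mk' {x | c * x + x ∈ N}
    (by simp [N.zero_mem])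
    (fun {x y} hx hy => by simpa [mul_add, add_add_add_comm] using N.add_mem hx hy)
    (fun {x} hx => by
      show c * -x + -x ∈ N; rw [mul_neg, ← neg_add]; exact N.neg_mem hx)
    (fun {a x} hx => by
      simpa [mul_add, ← mul_assoc, ← hc a] using N.mul_mem_left a _ hx)
    (fun {x a} hx => by simpa [add_mul, mul_assoc] using N.mul_mem_right _ a hx)

lemma mem_colonAddOne {hc : c ∈ centerSet X} {x : X} :
    x ∈ N.colonAddOne hc ↔ c * x + x ∈ N :=
  mem_mk' ..

lemma le_colonAddOne (hc : c ∈ centerSet X) : N ≤ N.colonAddOne hc :=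
  fun x hx => mem_colonAddOne.2 (N.add_mem (N.mul_mem_left c x hx) hx)

/-- `-c` is a central idempotent modulo the maximal ideal `N`, hence `0` or the unit modulo `N`. -/
lemma IsMaxMod.mem_or_add_mem_of_mul_self_add_mem (hN : N.IsMaxMod) (hu : N.IsModularUnit u)
    (hc : c ∈ centerSet X) (hcc : c * c + c ∈ N) : c ∈ N ∨ c + u ∈ N := by
  by_cases htop : N.colonAddOne hc = ⊤
  · have hcu : c * u + u ∈ N := mem_colonAddOne.1 (by rw [htop]; exact mem_top _)
    refine Or.inr ?_
    convert N.sub_mem hcu (hu c).1 using 1; abel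
  · exact Or.inl (hN.2.2 _ (le_colonAddOne hc) htop ▸ mem_colonAddOne.2 hcc)

lemma IsMaxMod.add_mem_of_inter_centerSet_eq (hM : M.IsMaxMod) (hN : N.IsMaxMod)
    (hu : M.IsModularUnit u) (hv : N.IsModularUnit v)
    (hZ : (M : Set X) ∩ centerSet X = (N : Set X) ∩ centerSet X)
    (hc : c ∈ centerSet X) (hcu : c + u ∈ M) : c + v ∈ N := by
  have hccM : c * c + c ∈ M := by
    convert M.sub_mem (M.mul_mem_left c _ hcu) (hu c).1 using 1
    rw [mul_add]; abel
  have hccN : c * c + c ∈ N :=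
    ((Set.ext_iff.1 hZ _).1 ⟨hccM, mul_self_add_mem_centerSet hc⟩).1
  refine (hN.mem_or_add_mem_of_mul_self_add_mem hv hc hccN).resolve_left fun hcN => ?_
  have hcM : c ∈ M := ((Set.ext_iff.1 hZ c).2 ⟨hcN, hc⟩).1
  exact hM.not_mem hu (by simpa using M.sub_mem hcu hcM)

end TwoSidedIdeal

namespace Unitization

variable {𝕜 X : Type*} [Field 𝕜] [NonUnitalRing X] [Module 𝕜 X]

def comapInr (N : TwoSidedIdeal (Unitization 𝕜 X)) : TwoSidedIdeal X :=
  TwoSidedIdeal.comap (inrNonUnitalAlgHom 𝕜 X) N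

lemma mem_comapInr {N : TwoSidedIdeal (Unitization 𝕜 X)} {x : X} :
    x ∈ comapInr N ↔ (x : Unitization 𝕜 X) ∈ N :=
  TwoSidedIdeal.mem_comap _

lemma isModularUnit_comapInr {u : X} {N : TwoSidedIdeal (Unitization 𝕜 X)}
    (hu : 1 - (u : Unitization 𝕜 X) ∈ N) : (comapInr N).IsModularUnit u := fun x => by
  simp only [mem_comapInr, inr_sub, inr_mul]
  constructor
  · simpa [mul_sub] using N.neg_mem (N.mul_mem_left (x : Unitization 𝕜 X) _ hu)
  · simpa [sub_mul] using N.neg_mem (N.mul_mem_right _ (x : Unitization 𝕜 X) hu)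

lemma comapInr_ne_top {u : X} {K : TwoSidedIdeal (Unitization 𝕜 X)} (hK : K ≠ ⊤)
    (hu : 1 - (u : Unitization 𝕜 X) ∈ K) : comapInr K ≠ ⊤ := fun h => by
  have hu' : (u : Unitization 𝕜 X) ∈ K := mem_comapInr.1 (h ▸ TwoSidedIdeal.mem_top _ : u ∈ _)
  exact hK (K.eq_top (by simpa using K.add_mem hu hu'))

variable [IsScalarTower 𝕜 X X] [SMulCommClass 𝕜 X X] {M N : TwoSidedIdeal X} {u v : X}

lemma mem_centerSet_iff {z : Unitization 𝕜 X} :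
    z ∈ centerSet (Unitization 𝕜 X) ↔ z.snd ∈ centerSet X := by
  refine ⟨fun h x => ?_, fun h w => Unitization.ext (by simp [mul_comm]) ?_⟩
  · simpa [add_comm] using congrArg (·.snd) (h x)
  · simp only [snd_mul]
    rw [h w.snd]; abel

variable (𝕜 X) in
abbrev inrIdeal : TwoSidedIdeal (Unitization 𝕜 X) := TwoSidedIdeal.ker (fstHom 𝕜 X)

lemma mem_inrIdeal {y : Unitization 𝕜 X} : y ∈ inrIdeal 𝕜 X ↔ y.fst = 0 :=
  TwoSidedIdeal.mem_ker _ |>.trans (by rw [fstHom_apply])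

lemma inr_mem_inrIdeal (x : X) : (x : Unitization 𝕜 X) ∈ inrIdeal 𝕜 X :=
  mem_inrIdeal.2 (fst_inr 𝕜 x)

lemma comapInr_inter_centerSet (N : TwoSidedIdeal (Unitization 𝕜 X)) :
    (comapInr N : Set X) ∩ centerSet X =
      inr ⁻¹' ((N : Set (Unitization 𝕜 X)) ∩ centerSet _) := by
  ext x
  simp [mem_comapInr, mem_centerSet_iff]

lemma isMaxMod_inrIdeal : (inrIdeal 𝕜 X).IsMaxMod := by
  refine ⟨TwoSidedIdeal.isModular_of_ring _, fun h => ?_, fun K hle hK => ?_⟩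
  · have h1 : (1 : Unitization 𝕜 X) ∈ inrIdeal 𝕜 X := h ▸ TwoSidedIdeal.mem_top _
    simp [mem_inrIdeal] at h1
  refine le_antisymm (fun y hy => mem_inrIdeal.2 ?_) hle
  by_contra h0
  have hfst : inl y.fst ∈ K := by
    rw [eq_sub_of_add_eq (inl_fst_add_inr_snd_eq y)]
    exact K.sub_mem hy (hle (inr_mem_inrIdeal y.snd))
  refine hK (K.eq_top ?_)
  simpa [inl_mul_inl, h0] using K.mul_mem_left (inl y.fst⁻¹) _ hfst

variable (𝕜) in
def extendIdeal (M : TwoSidedIdeal X) {u : X} (hu : M.IsModularUnit u) :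
    TwoSidedIdeal (Unitization 𝕜 X) :=
  .mk' {y | y.snd + y.fst • u ∈ M}
    (by simp [M.zero_mem])
    (fun {x y} hx hy => by
      show _ ∈ M
      convert M.add_mem hx hy using 1; simp only [snd_add, fst_add, add_smul]; abel)
    (fun {x} hx => by
      show _ ∈ M
      convert M.neg_mem hx using 1; simp only [snd_neg, fst_neg, neg_smul]; abel)
    (fun {a y} hy => by
      have key : (a * y).snd + (a * y).fst • u =
          a.fst • (y.snd + y.fst • u) + a.snd * (y.snd + y.fst • u)
            - y.fst • (a.snd * u - a.snd) := by
        simp only [snd_mul, fst_mul, smul_add, mul_add, smul_sub, smul_smul, mul_smul_comm]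
        abel
      show _ ∈ M
      rw [key]
      exact M.sub_mem (M.add_mem (hu.smul_mem hy _) (M.mul_mem_left _ _ hy))
        (hu.smul_mem (hu a.snd).1 _))
    (fun {y a} hy => by
      have key : (y * a).snd + (y * a).fst • u =
          a.fst • (y.snd + y.fst • u) + (y.snd + y.fst • u) * a.snd
            - y.fst • (u * a.snd - a.snd) := by
        simp only [snd_mul, fst_mul, smul_add, add_mul, smul_sub, smul_smul, smul_mul_assoc]
        rw [mul_comm y.fst a.fst]
        abel
      show _ ∈ M
      rw [key]
      exact M.sub_mem (M.add_mem (hu.smul_mem hy _) (M.mul_mem_right _ _ hy))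
        (hu.smul_mem (hu a.snd).2 _))

lemma mem_extendIdeal {hu : M.IsModularUnit u} {y : Unitization 𝕜 X} :
    y ∈ extendIdeal 𝕜 M hu ↔ y.snd + y.fst • u ∈ M :=
  TwoSidedIdeal.mem_mk' ..

lemma extendIdeal_mono {K : TwoSidedIdeal X} (hu : M.IsModularUnit u) (h : M ≤ K) :
    extendIdeal 𝕜 M hu ≤ extendIdeal 𝕜 K (hu.mono h) :=
  fun _ hy => mem_extendIdeal.2 (h (mem_extendIdeal.1 hy))

lemma comapInr_extendIdeal (hu : M.IsModularUnit u) : comapInr (extendIdeal 𝕜 M hu) = M :=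
  TwoSidedIdeal.ext fun x => by simp [mem_comapInr, mem_extendIdeal]

lemma one_sub_inr_mem_extendIdeal (hu : M.IsModularUnit u) :
    1 - (u : Unitization 𝕜 X) ∈ extendIdeal 𝕜 M hu := by
  simp [sub_eq_add_neg, mem_extendIdeal, M.zero_mem]

lemma extendIdeal_ne_top (hu : M.IsModularUnit u) (hM : M ≠ ⊤) : extendIdeal 𝕜 M hu ≠ ⊤ := by
  intro h
  have h1 := mem_extendIdeal.1 (h ▸ TwoSidedIdeal.mem_top _ : (1 : Unitization 𝕜 X) ∈ _)
  exact hM (hu.eq_top_of_mem (by simpa using h1))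

lemma snd_add_fst_smul_mem_comapInr {N : TwoSidedIdeal (Unitization 𝕜 X)}
    (hu : 1 - (u : Unitization 𝕜 X) ∈ N) {y : Unitization 𝕜 X} (hy : y ∈ N) :
    y.snd + y.fst • u ∈ comapInr N := by
  have key : ((y.snd + y.fst • u : X) : Unitization 𝕜 X) =
      y - inl y.fst * (1 - (u : Unitization 𝕜 X)) := by
    ext <;> simp [sub_eq_add_neg, mul_add]
  rw [mem_comapInr, key]
  exact N.sub_mem hy (N.mul_mem_left _ _ hu)

lemma isMaxMod_extendIdeal (hM : M.IsMaxMod) (hu : M.IsModularUnit u) :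
    (extendIdeal 𝕜 M hu).IsMaxMod := by
  refine ⟨TwoSidedIdeal.isModular_of_ring _, extendIdeal_ne_top hu hM.2.1, fun K hle hK => ?_⟩
  have h1u : 1 - (u : Unitization 𝕜 X) ∈ K := hle (one_sub_inr_mem_extendIdeal hu)
  have hKM : comapInr K = M :=
    hM.2.2 _ (comapInr_extendIdeal (𝕜 := 𝕜) hu ▸ TwoSidedIdeal.comap_le_comap _ hle)
      (comapInr_ne_top hK h1u)
  exact le_antisymm
    (fun y hy => mem_extendIdeal.2 (hKM ▸ snd_add_fst_smul_mem_comapInr h1u hy)) hle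

lemma extendIdeal_inter_centerSet_eq_inrIdeal (hM : M.IsMaxMod) (hu : M.IsModularUnit u)
    (hZ : centerSet X ⊆ M) :
    (extendIdeal 𝕜 M hu : Set (Unitization 𝕜 X)) ∩ centerSet _ =
      (inrIdeal 𝕜 X : Set (Unitization 𝕜 X)) ∩ centerSet _ := by
  ext z
  simp only [Set.mem_inter_iff, SetLike.mem_coe, mem_extendIdeal, mem_inrIdeal,
    mem_centerSet_iff]
  refine ⟨fun ⟨hz, hc⟩ => ⟨?_, hc⟩, fun ⟨h0, hc⟩ => ⟨by simpa [h0] using hZ hc, hc⟩⟩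
  by_contra h0
  have hfst : z.fst • u ∈ M := by simpa using M.sub_mem hz (hZ hc)
  exact hM.not_mem hu (by simpa [smul_smul, h0] using hu.smul_mem hfst z.fst⁻¹)

lemma extendIdeal_inter_centerSet_subset (hM : M.IsMaxMod) (hN : N.IsMaxMod)
    (hu : M.IsModularUnit u) (hv : N.IsModularUnit v)
    (hZ : (M : Set X) ∩ centerSet X = (N : Set X) ∩ centerSet X) :
    (extendIdeal 𝕜 M hu : Set (Unitization 𝕜 X)) ∩ centerSet _ ⊆
      (extendIdeal 𝕜 N hv : Set (Unitization 𝕜 X)) ∩ centerSet _ := by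
  rintro z ⟨hz, hc⟩
  refine ⟨?_, hc⟩
  rw [SetLike.mem_coe, mem_extendIdeal] at hz ⊢
  rw [mem_centerSet_iff] at hc
  rcases eq_or_ne z.fst 0 with h0 | h0
  · rw [h0, zero_smul, add_zero] at hz ⊢
    exact ((Set.ext_iff.1 hZ _).1 ⟨hz, hc⟩).1
  have hcu : z.fst⁻¹ • z.snd + u ∈ M := by
    simpa [smul_add, smul_smul, h0] using hu.smul_mem hz z.fst⁻¹
  have hcv := hM.add_mem_of_inter_centerSet_eq hN hu hv hZ (smul_mem_centerSet hc _) hcu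
  simpa [smul_add, smul_smul, h0] using hv.smul_mem hcv z.fst

variable {N : TwoSidedIdeal (Unitization 𝕜 X)}

lemma le_extendIdeal_comapInr (h1u : 1 - (u : Unitization 𝕜 X) ∈ N)
    (hu : (comapInr N).IsModularUnit u) : N ≤ extendIdeal 𝕜 (comapInr N) hu :=
  fun _ hy => mem_extendIdeal.2 (snd_add_fst_smul_mem_comapInr h1u hy)

lemma isMaxMod_comapInr (hN : N.IsMaxMod) (h1u : 1 - (u : Unitization 𝕜 X) ∈ N) :
    (comapInr N).IsMaxMod := by
  have hu := isModularUnit_comapInr h1u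
  refine ⟨⟨u, hu⟩, comapInr_ne_top hN.2.1 h1u, fun K hle hK => ?_⟩
  have hNK : extendIdeal 𝕜 K (hu.mono hle) = N :=
    hN.2.2 _ ((le_extendIdeal_comapInr h1u hu).trans (extendIdeal_mono hu hle))
      (extendIdeal_ne_top _ hK)
  rw [← hNK, comapInr_extendIdeal]

lemma mem_iff_snd_add_fst_smul_mem (hN : N.IsMaxMod) (h1u : 1 - (u : Unitization 𝕜 X) ∈ N)
    {y : Unitization 𝕜 X} : y ∈ N ↔ y.snd + y.fst • u ∈ comapInr N := by
  have hu := isModularUnit_comapInr h1u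
  have hNK := hN.2.2 _ (le_extendIdeal_comapInr h1u hu)
    (extendIdeal_ne_top hu (isMaxMod_comapInr hN h1u).2.1)
  rw [← mem_extendIdeal (hu := hu), hNK]

lemma eq_of_comapInr_eq {N₁ N₂ : TwoSidedIdeal (Unitization 𝕜 X)} (h₁ : N₁.IsMaxMod)
    (h₂ : N₂.IsMaxMod) (hu : 1 - (u : Unitization 𝕜 X) ∈ N₁)
    (hv : 1 - (v : Unitization 𝕜 X) ∈ N₂)
    (h : comapInr N₁ = comapInr N₂) : N₁ = N₂ := by
  have hu₂ : (comapInr N₂).IsModularUnit u := h ▸ isModularUnit_comapInr hu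
  ext y
  rw [mem_iff_snd_add_fst_smul_mem h₁ hu, mem_iff_snd_add_fst_smul_mem h₂ hv, h,
    hu₂.add_smul_mem_iff (isModularUnit_comapInr hv)]

lemma eq_inrIdeal_or_exists_one_sub_inr_mem (hN : N.IsMaxMod) :
    N = inrIdeal 𝕜 X ∨ ∃ u : X, 1 - (u : Unitization 𝕜 X) ∈ N := by
  by_cases h : N ≤ inrIdeal 𝕜 X
  · exact Or.inl (hN.2.2 _ h isMaxMod_inrIdeal.2.1).symm
  obtain ⟨n, hn, hn0⟩ := SetLike.not_le_iff_exists.1 h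
  rw [mem_inrIdeal] at hn0
  refine Or.inr ⟨-(n.fst⁻¹ • n.snd), ?_⟩
  convert N.mul_mem_left (inl n.fst⁻¹) n hn using 1
  ext <;> simp [hn0, sub_eq_add_neg]

end Unitization

open Unitization

theorem weaklyCentral_of_weaklyCentral_unitization {𝕜 X : Type*} [Field 𝕜] [NonUnitalRing X]
    [Module 𝕜 X] [IsScalarTower 𝕜 X X] [SMulCommClass 𝕜 X X]
    (h : WeaklyCentral (Unitization 𝕜 X)) : WeaklyCentral X := by
  refine ⟨fun M hM hZ => ?_, fun M N hM hN hZ => ?_⟩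
  · obtain ⟨u, hu : M.IsModularUnit u⟩ := hM.1
    have hMX := h.2 _ _ (isMaxMod_extendIdeal hM hu) isMaxMod_inrIdeal
      (extendIdeal_inter_centerSet_eq_inrIdeal hM hu hZ)
    have h1u := one_sub_inr_mem_extendIdeal (𝕜 := 𝕜) hu
    rw [hMX, mem_inrIdeal] at h1u
    simp [sub_eq_add_neg] at h1u
  · obtain ⟨u, hu : M.IsModularUnit u⟩ := hM.1
    obtain ⟨v, hv : N.IsModularUnit v⟩ := hN.1
    have hMN := h.2 _ _ (isMaxMod_extendIdeal (𝕜 := 𝕜) hM hu) (isMaxMod_extendIdeal hN hv)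
      ((extendIdeal_inter_centerSet_subset hM hN hu hv hZ).antisymm
        (extendIdeal_inter_centerSet_subset hN hM hv hu hZ.symm))
    rw [← comapInr_extendIdeal (𝕜 := 𝕜) hu, hMN, comapInr_extendIdeal]

theorem weaklyCentral_unitization_of_weaklyCentral {𝕜 X : Type*} [Field 𝕜] [NonUnitalRing X]
    [Module 𝕜 X] [IsScalarTower 𝕜 X X] [SMulCommClass 𝕜 X X]
    (h : WeaklyCentral X) : WeaklyCentral (Unitization 𝕜 X) := by
  refine ⟨fun N hN hZ => hN.2.1 (N.eq_top (hZ one_mem_centerSet)), fun N₁ N₂ h₁ h₂ hZ => ?_⟩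
  have hZX := congrArg (Set.preimage (inr : X → Unitization 𝕜 X)) hZ
  simp only [← comapInr_inter_centerSet] at hZX
  have hne {N : TwoSidedIdeal (Unitization 𝕜 X)} (hN : N.IsMaxMod) {u : X}
      (hu : 1 - (u : Unitization 𝕜 X) ∈ N)
      (hZN : (comapInr (inrIdeal 𝕜 X) : Set X) ∩ centerSet X =
        (comapInr N : Set X) ∩ centerSet X) : False :=
    h.1 _ (isMaxMod_comapInr hN hu) fun z hz =>
      ((Set.ext_iff.1 hZN z).1 ⟨mem_comapInr.2 (inr_mem_inrIdeal z), hz⟩).1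
  rcases eq_inrIdeal_or_exists_one_sub_inr_mem h₁ with rfl | ⟨u, hu⟩ <;>
    rcases eq_inrIdeal_or_exists_one_sub_inr_mem h₂ with rfl | ⟨v, hv⟩
  · rfl
  · exact (hne h₂ hv hZX).elim
  · exact (hne h₁ hu hZX.symm).elim
  · exact eq_of_comapInr_eq h₁ h₂ hu hv
      (h.2 _ _ (isMaxMod_comapInr h₁ hu) (isMaxMod_comapInr h₂ hv) hZX)

theorem weaklyCentral_iff_unitization_general
    {X : Type*} [NonUnitalNormedRing X] [NormedSpace ℂ X]
    [IsScalarTower ℂ X X] [SMulCommClass ℂ X X] :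
    WeaklyCentral X ↔ WeaklyCentral (Unitization ℂ X) :=
  ⟨weaklyCentral_unitization_of_weaklyCentral, weaklyCentral_of_weaklyCentral_unitization⟩

/-- A non-unital Banach *-algebra `X` is weakly central iff its
unitization `X̃ = X ⊕ ℂ` is weakly central. -/
theorem weaklyCentral_iff_unitization
    {X : Type*} [NonUnitalNormedRing X] [NormedSpace ℂ X] [CompleteSpace X]
    [IsScalarTower ℂ X X] [SMulCommClass ℂ X X]
    [StarRing X] [StarModule ℂ X]
    (hnu : ¬ ∃ e : X, ∀ x : X, e * x = x ∧ x * e = x) :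
    WeaklyCentral X ↔ WeaklyCentral (Unitization ℂ X) :=
  weaklyCentral_iff_unitization_general
end
end

section
/- Let X be the 4-dimensional subalgebra of M₃(ℂ) of matrices of the form [[a,0,d],[0,b,0],[0,0,c]]. Then Z(X) = {[[t,0,0],[0,b,0],[0,0,t]] : b,t ∈ ℂ}, the sets M₁ = {d₃₃ = 0 entries, i.e. [[a,0,d],[0,b,0],[0,0,0]]} and M₂ = {[[0,0,d],[0,b,0],[0,0,c]]} are distinct maximal modular ideals with M₁ ∩ Z(X) = M₂ ∩ Z(X), so X is not weakly central. -/
noncomputable section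

/-- The algebra `{[[a,0,d],[0,b,0],[0,0,c]] : a,b,c,d ∈ ℂ}` as a non-unital
subalgebra of `M₃(ℂ)`. -/
def arrowAlg : NonUnitalSubalgebra ℂ (Matrix (Fin 3) (Fin 3) ℂ) where
  carrier := {m | m 0 1 = 0 ∧ m 1 0 = 0 ∧ m 1 2 = 0 ∧ m 2 0 = 0 ∧ m 2 1 = 0}
  add_mem' := by
    rintro a b ⟨h1, h2, h3, h4, h5⟩ ⟨g1, g2, g3, g4, g5⟩
    refine ⟨?_, ?_, ?_, ?_, ?_⟩ <;> simp [h1, h2, h3, h4, h5, g1, g2, g3, g4, g5]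
  zero_mem' := by refine ⟨?_, ?_, ?_, ?_, ?_⟩ <;> simp
  mul_mem' := by
    rintro a b ⟨h1, h2, h3, h4, h5⟩ ⟨g1, g2, g3, g4, g5⟩
    refine ⟨?_, ?_, ?_, ?_, ?_⟩ <;>
      simp [Matrix.mul_apply, Fin.sum_univ_three, h1, h2, h3, h4, h5, g1, g2, g3, g4, g5]
  smul_mem' := by
    rintro c a ⟨h1, h2, h3, h4, h5⟩
    refine ⟨?_, ?_, ?_, ?_, ?_⟩ <;> simp [h1, h2, h3, h4, h5]

/-! The ideals `M₁` and `M₂` are the kernels of the characters `x ↦ x₂₂` and `x ↦ x₀₀`, which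
are multiplicative because the algebra is upper triangular; kernels of surjective characters
are maximal modular ideals. On the centre the two diagonal entries agree, so both kernels cut
out the same subset of the centre, although they are different ideals. -/

namespace TwoSidedIdeal

variable {X K : Type*} [NonUnitalRing X] [DivisionRing K]

/-- Any preimage of `1` is a modular unit, and an element outside the kernel generates
everything because its multiples take every value of `φ`. -/
theorem isMaxMod_ker (φ : X →ₙ+* K) (hφ : Function.Surjective φ) : (ker φ).IsMaxMod := by
  obtain ⟨u, hu⟩ := hφ 1
  refine ⟨⟨u, fun x => ?_⟩, fun htop => ?_, fun N hle hN => le_antisymm (fun n hn => ?_) hle⟩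
  · simp [mem_ker, hu]
  · have hu₀ : u ∈ ker φ := htop ▸ mem_top X
    simp [mem_ker, hu] at hu₀
  · by_contra hn₀
    rw [mem_ker] at hn₀
    refine hN (eq_top_iff.2 fun x _ => ?_)
    obtain ⟨w, hw⟩ := hφ (φ x * (φ n)⁻¹)
    have hx : x - w * n ∈ ker φ := by simp [mem_ker, hw, hn₀]
    simpa using N.add_mem (hle hx) (N.mul_mem_left w n hn)

end TwoSidedIdeal

theorem not_weaklyCentral_of_inter_centerSet_eq {X : Type*} [NonUnitalRing X]
    {M N : TwoSidedIdeal X} (hM : M.IsMaxMod) (hN : N.IsMaxMod) (hne : M ≠ N)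
    (h : (M : Set X) ∩ centerSet X = (N : Set X) ∩ centerSet X) : ¬ WeaklyCentral X :=
  fun hX => hne (hX.2 M N hM hN h)

namespace arrowAlg

open Matrix TwoSidedIdeal

theorem one_mem : (1 : Matrix (Fin 3) (Fin 3) ℂ) ∈ arrowAlg := by
  refine ⟨?_, ?_, ?_, ?_, ?_⟩ <;> simp

theorem single_mem {i j : Fin 3} (h : i = j ∨ (i = 0 ∧ j = 2)) (c : ℂ) :
    single i j c ∈ arrowAlg := by
  rcases h with rfl | ⟨rfl, rfl⟩ <;> refine ⟨?_, ?_, ?_, ?_, ?_⟩ <;> simp [single_apply] <;> omega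

theorem mul_apply_diag (x y : arrowAlg) (i : Fin 3) :
    ((x * y : arrowAlg) : Matrix (Fin 3) (Fin 3) ℂ) i i =
      (x : Matrix (Fin 3) (Fin 3) ℂ) i i * (y : Matrix (Fin 3) (Fin 3) ℂ) i i := by
  obtain ⟨x₀₁, x₁₀, x₁₂, x₂₀, x₂₁⟩ := x.2
  obtain ⟨y₀₁, y₁₀, y₁₂, y₂₀, y₂₁⟩ := y.2
  fin_cases i <;>
    simp [mul_apply, Fin.sum_univ_three, x₀₁, x₁₀, x₁₂, x₂₀, x₂₁, y₀₁, y₁₀, y₁₂, y₂₀, y₂₁]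

def diagEntry (i : Fin 3) : arrowAlg →ₙ+* ℂ where
  toFun x := (x : Matrix (Fin 3) (Fin 3) ℂ) i i
  map_zero' := rfl
  map_add' _ _ := rfl
  map_mul' x y := mul_apply_diag x y i

@[simp]
theorem diagEntry_apply (i : Fin 3) (x : arrowAlg) :
    diagEntry i x = (x : Matrix (Fin 3) (Fin 3) ℂ) i i :=
  rfl

theorem diagEntry_surjective (i : Fin 3) : Function.Surjective (diagEntry i) :=
  fun c => ⟨⟨c • 1, SMulMemClass.smul_mem c one_mem⟩, by simp⟩

theorem mem_ker_diagEntry {i : Fin 3} {m : arrowAlg} :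
    m ∈ ker (diagEntry i) ↔ (m : Matrix (Fin 3) (Fin 3) ℂ) i i = 0 :=
  by rw [mem_ker, diagEntry_apply]

theorem centerSet_eq : centerSet arrowAlg = {z : arrowAlg |
    (z : Matrix (Fin 3) (Fin 3) ℂ) 0 2 = 0 ∧
    (z : Matrix (Fin 3) (Fin 3) ℂ) 0 0 = (z : Matrix (Fin 3) (Fin 3) ℂ) 2 2} := by
  ext z
  obtain ⟨z₀₁, z₁₀, z₁₂, z₂₀, z₂₁⟩ := z.2
  constructor
  · intro hz
    have entry02 (e : arrowAlg) :=
      congrArg (fun m : arrowAlg => (m : Matrix (Fin 3) (Fin 3) ℂ) 0 2) (hz e)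
    constructor
    · simpa [mul_apply, Fin.sum_univ_three] using
        entry02 ⟨single 2 2 1, single_mem (.inl rfl) 1⟩
    · simpa [mul_apply, Fin.sum_univ_three, z₂₀] using
        entry02 ⟨single 0 2 1, single_mem (.inr ⟨rfl, rfl⟩) 1⟩
  · rintro ⟨hz₀₂, hz₀₀⟩ x
    obtain ⟨x₀₁, x₁₀, x₁₂, x₂₀, x₂₁⟩ := x.2
    ext i j : 2
    fin_cases i <;> fin_cases j <;>
      simp [mul_apply, Fin.sum_univ_three, z₀₁, z₁₀, z₁₂, z₂₀, z₂₁, hz₀₂, hz₀₀,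
        x₀₁, x₁₀, x₁₂, x₂₀, x₂₁] <;> ring

theorem ker_diagEntry_inter_centerSet :
    (ker (diagEntry 2) : Set arrowAlg) ∩ centerSet arrowAlg =
      (ker (diagEntry 0) : Set arrowAlg) ∩ centerSet arrowAlg := by
  ext z
  simp only [Set.mem_inter_iff, SetLike.mem_coe, mem_ker_diagEntry, centerSet_eq]
  constructor <;> rintro ⟨h, hz₀₂, hz₀₀⟩
  exacts [⟨hz₀₀.trans h, hz₀₂, hz₀₀⟩, ⟨hz₀₀.symm.trans h, hz₀₂, hz₀₀⟩]

theorem ker_diagEntry_ne : ker (diagEntry 2) ≠ ker (diagEntry 0) := by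
  intro h
  have hE : (⟨single 0 0 1, single_mem (.inl rfl) 1⟩ : arrowAlg) ∈ ker (diagEntry 2) := by
    simp [mem_ker_diagEntry]
  simp [h, mem_ker_diagEntry] at hE

end arrowAlg

/-- For `X = {[[a,0,d],[0,b,0],[0,0,c]]} ⊆ M₃(ℂ)`:
`Z(X) = {[[t,0,0],[0,b,0],[0,0,t]]}`; the ideals `M₁` (entries with `c = 0`) and
`M₂` (entries with `a = 0`) are distinct maximal modular ideals with
`M₁ ∩ Z(X) = M₂ ∩ Z(X)`, and hence `X` is not weakly central. -/
theorem arrowAlg_not_weaklyCentral :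
    (centerSet arrowAlg = {z : arrowAlg |
        (z : Matrix (Fin 3) (Fin 3) ℂ) 0 2 = 0 ∧
        (z : Matrix (Fin 3) (Fin 3) ℂ) 0 0 = (z : Matrix (Fin 3) (Fin 3) ℂ) 2 2}) ∧
    (∃ M₁ M₂ : TwoSidedIdeal arrowAlg,
      (∀ m : arrowAlg, m ∈ M₁ ↔ (m : Matrix (Fin 3) (Fin 3) ℂ) 2 2 = 0) ∧
      (∀ m : arrowAlg, m ∈ M₂ ↔ (m : Matrix (Fin 3) (Fin 3) ℂ) 0 0 = 0) ∧
      M₁ ≠ M₂ ∧ M₁.IsMaxMod ∧ M₂.IsMaxMod ∧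
      (M₁ : Set arrowAlg) ∩ centerSet arrowAlg = (M₂ : Set arrowAlg) ∩ centerSet arrowAlg) ∧
    ¬ WeaklyCentral arrowAlg := by
  have hM₁ := TwoSidedIdeal.isMaxMod_ker _ (arrowAlg.diagEntry_surjective 2)
  have hM₂ := TwoSidedIdeal.isMaxMod_ker _ (arrowAlg.diagEntry_surjective 0)
  have hne := arrowAlg.ker_diagEntry_ne
  have hcenter := arrowAlg.ker_diagEntry_inter_centerSet
  exact ⟨arrowAlg.centerSet_eq,
    ⟨_, _, fun _ => arrowAlg.mem_ker_diagEntry, fun _ => arrowAlg.mem_ker_diagEntry, hne, hM₁, hM₂,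
      hcenter⟩,
    not_weaklyCentral_of_inter_centerSet_eq hM₁ hM₂ hne hcenter⟩
end
end

section
/- Let A, B be C*-algebras and J₁, K₁, J₂, K₂ closed two-sided ideals of A and B respectively (Jᵢ ⊆ A, Kᵢ ⊆ B). Then in the Banach space projective tensor product, (J₁ ⊗_γ K₁) ∩ (J₂ ⊗_γ K₂) = (J₁ ∩ J₂) ⊗_γ (K₁ ∩ K₂). -/
noncomputable section

/-- An abstract completed tensor product of two C*-algebras: a Banach algebra `T`
with a bilinear multiplicative map `A × B → T` whose elementary tensors span densely. -/
structure TensorSeed (A B T : Type*) [NonUnitalCStarAlgebra A] [NonUnitalCStarAlgebra B]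
    [NonUnitalNormedRing T] [NormedSpace ℂ T] [CompleteSpace T]
    [IsScalarTower ℂ T T] [SMulCommClass ℂ T T] where
  tmul : A →ₗ[ℂ] B →ₗ[ℂ] T
  tmul_mul : ∀ a a' b b', tmul a b * tmul a' b' = tmul (a * a') (b * b')
  dense_span : Dense ((Submodule.span ℂ {x : T | ∃ a b, x = tmul a b} : Submodule ℂ T) : Set T)

variable {A B T : Type*} [NonUnitalCStarAlgebra A] [NonUnitalCStarAlgebra B]
    [NonUnitalNormedRing T] [NormedSpace ℂ T] [CompleteSpace T]
    [IsScalarTower ℂ T T] [SMulCommClass ℂ T T]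

/-- `T` carries the Banach space projective tensor norm `‖u‖ = inf Σ ‖aᵢ‖‖bᵢ‖`. -/
def TensorSeed.IsProj (t : TensorSeed A B T) : Prop :=
  ∀ x : T, (∃ (n : ℕ) (a : Fin n → A) (b : Fin n → B), x = ∑ i, t.tmul (a i) (b i)) →
    ‖x‖ = sInf {r : ℝ | ∃ (n : ℕ) (a : Fin n → A) (b : Fin n → B),
      x = ∑ i, t.tmul (a i) (b i) ∧ r = ∑ i, ‖a i‖ * ‖b i‖}

/-- `T` carries the Haagerup tensor norm
`‖u‖ = inf ‖Σ aᵢaᵢ*‖^{1/2} ‖Σ bᵢ*bᵢ‖^{1/2}`. -/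
def TensorSeed.IsHaagerup (t : TensorSeed A B T) : Prop :=
  ∀ x : T, (∃ (n : ℕ) (a : Fin n → A) (b : Fin n → B), x = ∑ i, t.tmul (a i) (b i)) →
    ‖x‖ = sInf {r : ℝ | ∃ (n : ℕ) (a : Fin n → A) (b : Fin n → B),
      x = ∑ i, t.tmul (a i) (b i) ∧
      r = Real.sqrt ‖∑ i, a i * star (a i)‖ * Real.sqrt ‖∑ i, star (b i) * b i‖}

def TensorSeed.pspan (t : TensorSeed A B T) (S₁ : Set A) (S₂ : Set B) : Submodule ℂ T :=
  Submodule.span ℂ {x : T | ∃ a ∈ S₁, ∃ b ∈ S₂, x = t.tmul a b}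

/-- The product ideal `S₁ ⊗ S₂`, i.e. the closed span of the elementary tensors
`a ⊗ b` with `a ∈ S₁`, `b ∈ S₂`. -/
def TensorSeed.prodIdeal (t : TensorSeed A B T) (S₁ : Set A) (S₂ : Set B) : Set T :=
  closure (t.pspan S₁ S₂ : Set T)

/-- The closed ideal `I ⊗ B + A ⊗ J`. -/
def TensorSeed.sumIdeal (t : TensorSeed A B T) (I : Set A) (J : Set B) : Set T :=
  closure ((t.pspan I Set.univ ⊔ t.pspan Set.univ J : Submodule ℂ T) : Set T)

set_option maxHeartbeats 1000000


open Unitization in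
lemma twoSidedIdeal_exists_left_approx {A : Type*} [NonUnitalCStarAlgebra A]
    (J : TwoSidedIdeal A) {n : ℕ} (a : Fin n → A) (ha : ∀ i, a i ∈ J)
    {ε : ℝ} (hε : 0 < ε) :
    ∃ e ∈ J, ‖e‖ ≤ 1 ∧ ∀ i, ‖e * a i - a i‖ ≤ ε := by
  classical
  set c : A := ∑ i, a i * star (a i) with hc_def
  have hc_mem : c ∈ J := sum_mem fun i _ => J.mul_mem_right _ _ (ha i)
  have hc_sa : IsSelfAdjoint c := by
    simp only [hc_def, IsSelfAdjoint, star_sum, star_mul, star_star]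
  set f : ℝ → ℝ := fun t => t ^ 2 / (ε ^ 4 + t ^ 2) with hf_def
  set k : ℝ → ℝ := fun t => t / (ε ^ 4 + t ^ 2) with hk_def
  have hden : ∀ t : ℝ, 0 < ε ^ 4 + t ^ 2 := fun t => by positivity
  have hf_cont : Continuous f := by
    apply Continuous.div (by fun_prop) (by fun_prop) fun t => (hden t).ne'
  have hk_cont : Continuous k := by
    apply Continuous.div (by fun_prop) (by fun_prop) fun t => (hden t).ne'
  have hf0 : f 0 = 0 := by simp [hf_def]
  have hk0 : k 0 = 0 := by simp [hk_def]
  set e : A := cfcₙ f c with he_def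
  have he_mem : e ∈ J := by
    have : e = c * cfcₙ k c := by
      rw [he_def, show f = fun t => id t * k t by
        ext t; simp [hf_def, hk_def, sq]; ring]
      rw [cfcₙ_mul _ _ c (by fun_prop) (by simp) hk_cont.continuousOn hk0, cfcₙ_id ℝ c]
    rw [this]
    exact J.mul_mem_right _ _ hc_mem
  have hf_nonneg : ∀ t : ℝ, 0 ≤ f t := fun t => by positivity
  have hf_le_one : ∀ t : ℝ, f t ≤ 1 := fun t => by
    rw [hf_def, div_le_one (hden t)]; nlinarith [sq_nonneg t, pow_pos hε 4]
  have he_norm : ‖e‖ ≤ 1 :=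
    norm_cfcₙ_le fun t _ => by
      rw [Real.norm_eq_abs, abs_of_nonneg (hf_nonneg t)]; exact hf_le_one t
  refine ⟨e, he_mem, he_norm, fun i => ?_⟩
  -- pass to the unitization, with the spectral order
  letI := CStarAlgebra.spectralOrder (Unitization ℂ A)
  haveI := CStarAlgebra.spectralOrderedRing (Unitization ℂ A)
  rw [← Unitization.norm_inr (𝕜 := ℂ), Unitization.inr_sub, Unitization.inr_mul]
  set aU : Unitization ℂ A := (a i : Unitization ℂ A) with haU
  set cU : Unitization ℂ A := (c : Unitization ℂ A) with hcU
  have he_inr : (e : Unitization ℂ A) = cfc f cU := Unitization.real_cfcₙ_eq_cfc_inr c f hf0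
  set eU : Unitization ℂ A := (e : Unitization ℂ A) with heU
  have hcU_sum : cU = ∑ j, ((a j : Unitization ℂ A) * star ((a j : Unitization ℂ A))) := by
    rw [hcU, hc_def]
    exact (map_sum (Unitization.inrNonUnitalStarAlgHom ℂ A) (fun i => a i * star (a i))
      Finset.univ).trans (by simp [Unitization.inr_mul, Unitization.inr_star])
  have hcU_nonneg : (0 : Unitization ℂ A) ≤ cU := by
    rw [hcU_sum]
    exact Finset.sum_nonneg fun j _ => mul_star_self_nonneg _
  have hcU_sa : IsSelfAdjoint cU := IsSelfAdjoint.of_nonneg hcU_nonneg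
  have heUsa : IsSelfAdjoint eU := he_inr ▸ cfc_predicate f cU
  have hsub_sa : star (eU - 1) = eU - 1 := by
    simpa using (heUsa.sub (IsSelfAdjoint.one _)).star_eq
  -- the element to estimate
  set m : Unitization ℂ A := eU * aU - aU with hm
  have hm' : m = (eU - 1) * aU := by rw [hm, sub_mul, one_mul]
  have hmsq : ‖m‖ * ‖m‖ = ‖m * star m‖ := CStarRing.norm_self_mul_star.symm
  have hmm : m * star m = star (eU - 1) * (aU * star aU) * (eU - 1) := by
    rw [hm', hsub_sa, star_mul, hsub_sa]; noncomm_ring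
  have h_le : aU * star aU ≤ cU := by
    rw [hcU_sum, ← Finset.add_sum_erase _ _ (Finset.mem_univ i)]
    exact le_add_of_nonneg_right <| Finset.sum_nonneg fun j _ => mul_star_self_nonneg _
  have h_conj : m * star m ≤ star (eU - 1) * cU * (eU - 1) := by
    rw [hmm]; exact star_left_conjugate_le_conjugate h_le _
  have h_norm1 : ‖m * star m‖ ≤ ‖star (eU - 1) * cU * (eU - 1)‖ :=
    CStarAlgebra.norm_le_norm_of_nonneg_of_le (mul_star_self_nonneg m) h_conj
  have key : star (eU - 1) * cU * (eU - 1) = cfc (fun t : ℝ => (f t - 1) * t * (f t - 1)) cU := by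
    have h1 : cfc (fun t : ℝ => f t - 1) cU = eU - 1 := by
      rw [cfc_sub _ _ cU hf_cont.continuousOn (continuousOn_const), cfc_const_one ℝ cU, he_inr]
    rw [cfc_mul (fun t : ℝ => (f t - 1) * t) (fun t : ℝ => f t - 1) cU
        ((hf_cont.sub continuous_const).mul continuous_id).continuousOn
        (hf_cont.sub continuous_const).continuousOn,
      cfc_mul (fun t : ℝ => f t - 1) (fun t : ℝ => t) cU
        (hf_cont.sub continuous_const).continuousOn continuousOn_id,
      cfc_id' ℝ cU, h1, hsub_sa]
  have h_bound : ∀ t ∈ spectrum ℝ cU, ‖(f t - 1) * t * (f t - 1)‖ ≤ ε ^ 2 := by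
    intro t ht
    have ht0 : 0 ≤ t := spectrum_nonneg_of_nonneg hcU_nonneg ht
    have hd := hden t
    have hval : (f t - 1) * t * (f t - 1) = ε ^ 8 * t / (ε ^ 4 + t ^ 2) ^ 2 := by
      rw [hf_def]; field_simp; ring
    rw [Real.norm_eq_abs, hval, abs_of_nonneg (by positivity), div_le_iff₀ (by positivity)]
    -- ε ^ 8 * t ≤ ε ^ 2 * (ε ^ 4 + t ^ 2) ^ 2
    rcases le_total t (ε ^ 2) with h | h
    · have h1 : ε ^ 8 * t ≤ ε ^ 2 * (ε ^ 4) ^ 2 := by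
        nlinarith [pow_nonneg hε.le 8]
      have h2 : (ε ^ 4) ^ 2 ≤ (ε ^ 4 + t ^ 2) ^ 2 := by
        nlinarith [sq_nonneg t, pow_pos hε 4]
      nlinarith [pow_nonneg hε.le 2]
    · have h1 : ε ^ 6 ≤ t ^ 3 := by
        nlinarith [pow_le_pow_left₀ (sq_nonneg ε) h 3]
      have h2 : ε ^ 8 * t ≤ ε ^ 2 * t ^ 4 := by
        nlinarith [mul_le_mul_of_nonneg_left h1 (mul_nonneg (pow_nonneg hε.le 2) ht0)]
      have h3 : ε ^ 2 * t ^ 4 ≤ ε ^ 2 * (ε ^ 4 + t ^ 2) ^ 2 := by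
        nlinarith [pow_nonneg hε.le 10, mul_nonneg (pow_nonneg hε.le 6) (sq_nonneg t)]
      linarith
  have h_norm2 : ‖star (eU - 1) * cU * (eU - 1)‖ ≤ ε ^ 2 := by
    rw [key]; exact norm_cfc_le (by positivity) h_bound
  have : ‖m‖ * ‖m‖ ≤ ε ^ 2 := by rw [hmsq]; exact h_norm1.trans h_norm2
  nlinarith [norm_nonneg m, hε.le]


lemma TensorSeed.norm_tmul_le (t : TensorSeed A B T) (ht : t.IsProj) (a : A) (b : B) :
    ‖t.tmul a b‖ ≤ ‖a‖ * ‖b‖ := by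
  have h := ht (t.tmul a b) ⟨1, fun _ => a, fun _ => b, by simp⟩
  rw [h]
  refine csInf_le ⟨0, ?_⟩ ⟨1, fun _ => a, fun _ => b, by simp, by simp⟩
  rintro r ⟨n, a', b', -, rfl⟩
  positivity

lemma TensorSeed.tmul_mul_mem_pspan (t : TensorSeed A B T)
    (J₁ J₂ : TwoSidedIdeal A) (K₁ K₂ : TwoSidedIdeal B)
    {e : A} {f : B} (he : e ∈ J₁) (hf : f ∈ K₁) {z : T}
    (hz : z ∈ t.pspan (J₂ : Set A) (K₂ : Set B)) :
    t.tmul e f * z ∈ t.pspan ((J₁ : Set A) ∩ (J₂ : Set A)) ((K₁ : Set B) ∩ (K₂ : Set B)) := by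
  induction hz using Submodule.span_induction with
  | mem w hw =>
    obtain ⟨a, haJ, b, hbK, rfl⟩ := hw
    rw [t.tmul_mul]
    exact Submodule.subset_span ⟨e * a, ⟨J₁.mul_mem_right e a he, J₂.mul_mem_left e a haJ⟩,
      f * b, ⟨K₁.mul_mem_right f b hf, K₂.mul_mem_left f b hbK⟩, rfl⟩
  | zero => rw [mul_zero]; exact Submodule.zero_mem _
  | add x y _ _ hx hy => rw [mul_add]; exact Submodule.add_mem _ hx hy
  | smul c x _ hx => rw [mul_smul_comm]; exact Submodule.smul_mem _ _ hx


/-- For closed two-sided ideals `J₁, J₂ ⊆ A` and `K₁, K₂ ⊆ B`,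
`(J₁ ⊗_γ K₁) ∩ (J₂ ⊗_γ K₂) = (J₁ ∩ J₂) ⊗_γ (K₁ ∩ K₂)` in `A ⊗_γ B`. -/
theorem proj_tensor_inter_prodIdeal
    (t : TensorSeed A B T) (ht : t.IsProj)
    (J₁ J₂ : TwoSidedIdeal A) (hJ₁ : IsClosed (J₁ : Set A)) (hJ₂ : IsClosed (J₂ : Set A))
    (K₁ K₂ : TwoSidedIdeal B) (hK₁ : IsClosed (K₁ : Set B)) (hK₂ : IsClosed (K₂ : Set B)) :
    t.prodIdeal (J₁ : Set A) (K₁ : Set B) ∩ t.prodIdeal (J₂ : Set A) (K₂ : Set B) =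
      t.prodIdeal ((J₁ : Set A) ∩ (J₂ : Set A)) ((K₁ : Set B) ∩ (K₂ : Set B)) := by
  apply Set.Subset.antisymm
  · rintro x ⟨hx₁, hx₂⟩
    simp only [TensorSeed.prodIdeal] at hx₁ hx₂ ⊢
    have hclosed : IsClosed (closure
        ((t.pspan ((J₁ : Set A) ∩ (J₂ : Set A)) ((K₁ : Set B) ∩ (K₂ : Set B)) : Set T))) :=
      isClosed_closure
    rw [← hclosed.closure_eq]
    rw [Metric.mem_closure_iff]
    intro ε hε
    obtain ⟨y, hy_mem, hy_close⟩ := Metric.mem_closure_iff.mp hx₁ (ε / 4) (by positivity)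
    obtain ⟨n, cf, g, hg⟩ := Submodule.mem_span_set'.mp hy_mem
    choose aa haa bb hbb hgab using fun i => (g i).2
    set M : ℝ := ∑ i, ‖cf i‖ * (‖aa i‖ + ‖bb i‖) with hM
    have hM0 : 0 ≤ M := Finset.sum_nonneg fun i _ => by positivity
    set δ : ℝ := ε / (4 * (M + 1)) with hδ
    have hδ0 : 0 < δ := by positivity
    obtain ⟨e, heJ, he1, hea⟩ := twoSidedIdeal_exists_left_approx J₁ aa haa hδ0
    obtain ⟨f, hfK, hf1, hfb⟩ := twoSidedIdeal_exists_left_approx K₁ bb hbb hδ0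
    refine ⟨t.tmul e f * x, ?_, ?_⟩
    · exact map_mem_closure (continuous_mul_left _) hx₂
        fun z hz => t.tmul_mul_mem_pspan J₁ J₂ K₁ K₂ heJ hfK hz
    · have hy_eq : y = ∑ i, cf i • t.tmul (aa i) (bb i) := by
        rw [← hg]
        exact Finset.sum_congr rfl fun i _ => by rw [hgab i]
      have key : t.tmul e f * y - y
          = ∑ i, cf i • (t.tmul (e * aa i) (f * bb i) - t.tmul (aa i) (bb i)) := by
        rw [hy_eq, Finset.mul_sum, ← Finset.sum_sub_distrib]
        refine Finset.sum_congr rfl fun i _ => ?_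
        rw [mul_smul_comm, t.tmul_mul, ← smul_sub]
      have hterm : ∀ i, ‖t.tmul (e * aa i) (f * bb i) - t.tmul (aa i) (bb i)‖
          ≤ δ * (‖aa i‖ + ‖bb i‖) := by
        intro i
        have h1 : t.tmul (e * aa i) (f * bb i) - t.tmul (aa i) (bb i)
            = t.tmul (e * aa i - aa i) (f * bb i) + t.tmul (aa i) (f * bb i - bb i) := by
          rw [map_sub, LinearMap.sub_apply, map_sub]
          abel
        have h2 : ‖f * bb i‖ ≤ ‖bb i‖ := by
          refine (norm_mul_le f (bb i)).trans ?_
          exact mul_le_of_le_one_left (norm_nonneg _) hf1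
        calc ‖t.tmul (e * aa i) (f * bb i) - t.tmul (aa i) (bb i)‖
            ≤ ‖t.tmul (e * aa i - aa i) (f * bb i)‖ + ‖t.tmul (aa i) (f * bb i - bb i)‖ := by
              rw [h1]; exact norm_add_le _ _
          _ ≤ ‖e * aa i - aa i‖ * ‖f * bb i‖ + ‖aa i‖ * ‖f * bb i - bb i‖ := by
              gcongr <;> [exact t.norm_tmul_le ht _ _; exact t.norm_tmul_le ht _ _]
          _ ≤ δ * ‖bb i‖ + ‖aa i‖ * δ := by
              gcongr
              · exact (hea i).trans ((le_of_eq rfl))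
              · exact hfb i
          _ = δ * (‖aa i‖ + ‖bb i‖) := by ring
      have hyu : ‖t.tmul e f * y - y‖ ≤ δ * M := by
        rw [key]
        calc ‖∑ i, cf i • (t.tmul (e * aa i) (f * bb i) - t.tmul (aa i) (bb i))‖
            ≤ ∑ i, ‖cf i • (t.tmul (e * aa i) (f * bb i) - t.tmul (aa i) (bb i))‖ :=
              norm_sum_le _ _
          _ ≤ ∑ i, ‖cf i‖ * (δ * (‖aa i‖ + ‖bb i‖)) := by
              refine Finset.sum_le_sum fun i _ => ?_
              rw [norm_smul]
              exact mul_le_mul_of_nonneg_left (hterm i) (norm_nonneg _)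
          _ = δ * M := by
              rw [hM, Finset.mul_sum]
              exact Finset.sum_congr rfl fun i _ => by ring
      have hδM : δ * M ≤ ε / 4 := by
        rw [hδ, div_mul_eq_mul_div, div_le_div_iff₀ (by positivity) (by norm_num)]
        nlinarith [hM0, hε.le]
      have hu : ‖t.tmul e f‖ ≤ 1 := by
        refine (t.norm_tmul_le ht e f).trans ?_
        nlinarith [norm_nonneg e, norm_nonneg f]
      have hlast : dist (t.tmul e f * y) (t.tmul e f * x) ≤ ‖y - x‖ := by
        rw [dist_eq_norm, ← mul_sub]
        exact (norm_mul_le _ _).trans (mul_le_of_le_one_left (norm_nonneg _) hu)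
      have hxy : dist x y < ε / 4 := hy_close
      have hyx : ‖y - x‖ < ε / 4 := by
        rw [← dist_eq_norm, dist_comm]; exact hxy
      have h2 : dist y (t.tmul e f * y) ≤ ε / 4 := by
        rw [dist_eq_norm, norm_sub_rev]
        exact hyu.trans hδM
      calc dist x (t.tmul e f * x)
          ≤ dist x y + dist y (t.tmul e f * y) + dist (t.tmul e f * y) (t.tmul e f * x) :=
            dist_triangle4 _ _ _ _
        _ < ε / 4 + ε / 4 + ε / 4 := by
            have := hlast.trans hyx.le
            refine add_lt_add_of_lt_of_le (add_lt_add_of_lt_of_le hxy h2) this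
        _ < ε := by linarith
  · have mono : ∀ (S₁ S₁' : Set A) (S₂ S₂' : Set B), S₁ ⊆ S₁' → S₂ ⊆ S₂' →
        t.prodIdeal S₁ S₂ ⊆ t.prodIdeal S₁' S₂' := by
      intro S₁ S₁' S₂ S₂' h1 h2
      apply closure_mono
      refine SetLike.coe_subset_coe.mpr (Submodule.span_mono fun x hx => ?_)
      obtain ⟨a, ha, b, hb, hx⟩ := hx
      exact ⟨a, h1 ha, b, h2 hb, hx⟩
    exact Set.subset_inter
      (mono _ _ _ _ Set.inter_subset_left Set.inter_subset_left)
      (mono _ _ _ _ Set.inter_subset_right Set.inter_subset_right)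
end
end

section
/- Let X be a Banach algebra and I a weakly central closed two-sided ideal of X possessing an approximate identity. Then I ⊆ ker T_X, where T_X is the set of maximal modular ideals M of X such that either Z(X) ⊆ M, or M ∩ Z(X) = N ∩ Z(X) for some maximal modular ideal N ≠ M with Z(X) ⊄ M. -/
noncomputable section

section Aux

variable {X : Type*} [NonUnitalNormedRing X] [NormedSpace ℂ X]
    [IsScalarTower ℂ X X] [SMulCommClass ℂ X X]
    (S : NonUnitalSubalgebra ℂ X)

/-- The restriction of a two-sided ideal of `X` to the subalgebra `S`. -/
def restrIdeal (M : TwoSidedIdeal X) : TwoSidedIdeal S :=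
  TwoSidedIdeal.mk' {s : S | (s : X) ∈ M}
    (by simpa using M.zero_mem)
    (fun {x y} hx hy => by simpa using M.add_mem hx hy)
    (fun {x} hx => by simpa using M.neg_mem hx)
    (fun {x y} hy => by simpa using M.mul_mem_left (x : X) (y : X) hy)
    (fun {x y} hx => by simpa using M.mul_mem_right (x : X) (y : X) hx)

lemma mem_restrIdeal {M : TwoSidedIdeal X} {s : S} :
    s ∈ restrIdeal S M ↔ (s : X) ∈ M :=
  TwoSidedIdeal.mem_mk' _ _ _ _ _ _ _

variable (hleft : ∀ x : X, ∀ s ∈ S, x * s ∈ S) (hright : ∀ x : X, ∀ s ∈ S, s * x ∈ S)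

include hleft hright in
/-- If `S ⊄ M` where `M` is maximal modular, then `M` has a modular unit lying in `S`. -/
lemma exists_unit_in_S (M : TwoSidedIdeal X) (hM : M.IsMaxMod)
    (hS : ¬ (S : Set X) ⊆ (M : Set X)) :
    ∃ s₀ ∈ S, ∀ x : X, x * s₀ - x ∈ M ∧ s₀ * x - x ∈ M := by
  obtain ⟨u, hu⟩ := hM.1
  -- K = M + S, a two-sided ideal of X
  set K : TwoSidedIdeal X := TwoSidedIdeal.mk'
      {x : X | ∃ m ∈ M, ∃ s ∈ S, x = m + s}
      ⟨0, M.zero_mem, 0, S.zero_mem, by simp⟩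
      (fun {x y} hx hy => by
        obtain ⟨m, hm, s, hs, rfl⟩ := hx
        obtain ⟨m', hm', s', hs', rfl⟩ := hy
        exact ⟨m + m', M.add_mem hm hm', s + s', S.add_mem hs hs', by abel⟩)
      (fun {x} hx => by
        obtain ⟨m, hm, s, hs, rfl⟩ := hx
        exact ⟨-m, M.neg_mem hm, -s, S.neg_mem hs, by abel⟩)
      (fun {x y} hy => by
        obtain ⟨m, hm, s, hs, rfl⟩ := hy
        exact ⟨x * m, M.mul_mem_left _ _ hm, x * s, hleft x s hs, by noncomm_ring⟩)
      (fun {x y} hx => by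
        obtain ⟨m, hm, s, hs, rfl⟩ := hx
        exact ⟨m * y, M.mul_mem_right _ _ hm, s * y, hright y s hs, by noncomm_ring⟩)
      with hKdef
  have memK : ∀ x : X, x ∈ K ↔ ∃ m ∈ M, ∃ s ∈ S, x = m + s := fun x =>
    TwoSidedIdeal.mem_mk' _ _ _ _ _ _ _
  have hMK : M ≤ K := fun m hm => (memK m).2 ⟨m, hm, 0, S.zero_mem, by simp⟩
  obtain ⟨s, hsS, hsM⟩ : ∃ s ∈ S, s ∉ (M : Set X) := by
    by_contra h
    push_neg at h
    exact hS h
  have hKM : K ≠ M := fun h => hsM (h ▸ (memK s).2 ⟨0, M.zero_mem, s, hsS, by simp⟩)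
  have hKtop : K = ⊤ := by
    by_contra h
    exact hKM (hM.2.2 K hMK h)
  have huK : u ∈ K := hKtop ▸ TwoSidedIdeal.mem_top _
  obtain ⟨m, hm, s₀, hs₀, hu_eq⟩ := (memK u).1 huK
  refine ⟨s₀, hs₀, fun x => ⟨?_, ?_⟩⟩
  · have h : x * s₀ - x = (x * u - x) - x * m := by rw [hu_eq]; noncomm_ring
    rw [h]
    exact M.sub_mem (hu x).1 (M.mul_mem_left _ _ hm)
  · have h : s₀ * x - x = (u * x - x) - m * x := by rw [hu_eq]; noncomm_ring
    rw [h]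
    exact M.sub_mem (hu x).2 (M.mul_mem_right _ _ hm)

include hleft hright in
/-- Barnes: the restriction of a maximal modular ideal `M` of `X` with `S ⊄ M`
is a maximal modular ideal of `S`. -/
lemma restrIdeal_isMaxMod (M : TwoSidedIdeal X) (hM : M.IsMaxMod)
    (hS : ¬ (S : Set X) ⊆ (M : Set X)) :
    (restrIdeal S M).IsMaxMod := by
  obtain ⟨s₀, hs₀S, hs₀⟩ := exists_unit_in_S S hleft hright M hM hS
  refine ⟨⟨⟨s₀, hs₀S⟩, fun x => ⟨?_, ?_⟩⟩, ?_, ?_⟩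
  · exact (mem_restrIdeal S).2 (by simpa using (hs₀ (x : X)).1)
  · exact (mem_restrIdeal S).2 (by simpa using (hs₀ (x : X)).2)
  · intro h
    refine hS fun x hx => ?_
    have : (⟨x, hx⟩ : S) ∈ restrIdeal S M := h ▸ TwoSidedIdeal.mem_top _
    exact (mem_restrIdeal S).1 this
  · intro N' hle hNtop
    by_contra hne
    -- get n ∈ N' \ M
    obtain ⟨n, hnN, hnM⟩ : ∃ n : S, n ∈ N' ∧ (n : X) ∉ M := by
      by_contra h
      push_neg at h
      exact hne (le_antisymm (fun z hz => (mem_restrIdeal S).2 (h z hz)) hle)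
    -- the set of elements of X lying in N' (viewed in X)
    set NX : Set X := {x : X | ∃ h : x ∈ S, (⟨x, h⟩ : S) ∈ N'} with hNXdef
    have hNX0 : (0 : X) ∈ NX := ⟨S.zero_mem, N'.zero_mem⟩
    have hNXadd : ∀ {x y : X}, x ∈ NX → y ∈ NX → x + y ∈ NX := by
      rintro x y ⟨hx, hx'⟩ ⟨hy, hy'⟩
      exact ⟨S.add_mem hx hy, N'.add_mem hx' hy'⟩
    have hNXmulL : ∀ (a : S) {x : X}, x ∈ NX → (a : X) * x ∈ NX := by
      rintro a x ⟨hx, hx'⟩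
      exact ⟨S.mul_mem a.2 hx, N'.mul_mem_left a ⟨x, hx⟩ hx'⟩
    have hNXmulR : ∀ (b : S) {x : X}, x ∈ NX → x * (b : X) ∈ NX := by
      rintro b x ⟨hx, hx'⟩
      exact ⟨S.mul_mem hx b.2, N'.mul_mem_right ⟨x, hx⟩ b hx'⟩
    -- the lift of N' to an ideal of X
    set Nl : TwoSidedIdeal X := TwoSidedIdeal.mk'
        {x : X | ∀ a b : S, (a : X) * x * (b : X) ∈ NX}
        (fun a b => by simpa using hNX0)
        (fun {x y} hx hy a b => by
          have h : (a : X) * (x + y) * b = (a : X) * x * b + (a : X) * y * b := by noncomm_ring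
          rw [h]; exact hNXadd (hx a b) (hy a b))
        (fun {x} hx a b => by
          have h : (a : X) * (-x) * b = -((a : X) * x * b) := by noncomm_ring
          rw [h]
          rcases hx a b with ⟨h1, h2⟩
          refine ⟨S.neg_mem h1, ?_⟩
          have hneg : (⟨-((a : X) * x * b), S.neg_mem h1⟩ : S) =
              -(⟨(a : X) * x * b, h1⟩ : S) := Subtype.ext (by simp)
          rw [hneg]
          exact N'.neg_mem h2)
        (fun {x y} hy a b => by
          have h : (a : X) * (x * y) * b = ((⟨(a : X) * x, hright x a a.2⟩ : S) : X) * y * b := by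
            simp [mul_assoc]
          rw [h]; exact hy _ b)
        (fun {x y} hx a b => by
          have h : (a : X) * (x * y) * b = (a : X) * x * ((⟨y * (b : X), hleft y b b.2⟩ : S) : X) := by
            simp [mul_assoc]
          rw [h]; exact hx a _)
        with hNldef
    have memNl : ∀ x : X, x ∈ Nl ↔ ∀ a b : S, (a : X) * x * (b : X) ∈ NX := fun x =>
      TwoSidedIdeal.mem_mk' _ _ _ _ _ _ _
    have hMNl : M ≤ Nl := by
      intro m hm
      refine (memNl m).2 fun a b => ?_
      have hmS : (a : X) * m * b ∈ S := S.mul_mem (hright m a a.2) b.2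
      have hmM : (a : X) * m * b ∈ M := M.mul_mem_right _ _ (M.mul_mem_left _ _ hm)
      exact ⟨hmS, hle ((mem_restrIdeal S).2 hmM)⟩
    have hnNl : (n : X) ∈ Nl := by
      refine (memNl n).2 fun a b => ?_
      refine ⟨S.mul_mem (S.mul_mem a.2 n.2) b.2, ?_⟩
      have : (⟨(a : X) * n * b, S.mul_mem (S.mul_mem a.2 n.2) b.2⟩ : S) = a * n * b :=
        Subtype.ext (by simp)
      rw [this]
      exact N'.mul_mem_right _ b (N'.mul_mem_left a n hnN)
    have hNlM : Nl ≠ M := fun h => hnM (h ▸ hnNl)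
    have hNltop : Nl = ⊤ := by
      by_contra h
      exact hNlM (hM.2.2 Nl hMNl h)
    -- conclude N' = ⊤, contradiction
    apply hNtop
    refine le_antisymm le_top fun z _ => ?_
    set u' : S := ⟨s₀, hs₀S⟩ with hu'
    have hz : (z : X) ∈ Nl := hNltop ▸ TwoSidedIdeal.mem_top _
    obtain ⟨hmem, hz'⟩ := (memNl (z : X)).1 hz u' u'
    -- z - u' * z * u' ∈ M ∩ S
    have hdiff : z - u' * z * u' ∈ restrIdeal S M := by
      refine (mem_restrIdeal S).2 ?_
      have h : ((z - u' * z * u' : S) : X) =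
          -(((z : X) * s₀ - z)) - (s₀ * (z : X) - z) * s₀ := by
        push_cast [hu']
        noncomm_ring
      rw [h]
      exact M.sub_mem (M.neg_mem (hs₀ z).1) (M.mul_mem_right _ _ (hs₀ z).2)
    have hzuzu : u' * z * u' ∈ N' := by
      have : (⟨(u' : X) * z * u', hmem⟩ : S) = u' * z * u' := Subtype.ext (by simp)
      exact this ▸ hz'
    have : (z - u' * z * u') + u' * z * u' ∈ N' := N'.add_mem (hle hdiff) hzuzu
    simpa using this

end Aux

/-- If `I` is a weakly central closed two-sided ideal of a Banach
algebra `X` possessing an approximate identity, then `I ⊆ ker T_X`, where `T_X` is the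
set of maximal modular ideals `M` with `Z(X) ⊆ M`, or with `M ∩ Z(X) = N ∩ Z(X)` for
some maximal modular ideal `N ≠ M` and `Z(X) ⊄ M`. -/
theorem weaklyCentral_ideal_subset_kerT
    {X : Type*} [NonUnitalNormedRing X] [NormedSpace ℂ X] [CompleteSpace X]
    [IsScalarTower ℂ X X] [SMulCommClass ℂ X X]
    (S : NonUnitalSubalgebra ℂ X)
    (hleft : ∀ x : X, ∀ s ∈ S, x * s ∈ S) (hright : ∀ x : X, ∀ s ∈ S, s * x ∈ S)
    (hclosed : IsClosed (S : Set X))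
    (happrox : ∃ (ι : Type) (l : Filter ι) (e : ι → X), l.NeBot ∧ (∀ i, e i ∈ S) ∧
      ∀ a ∈ S, Filter.Tendsto (fun i => e i * a) l (nhds a) ∧
        Filter.Tendsto (fun i => a * e i) l (nhds a))
    (hwc : WeaklyCentral S) :
    ∀ M : TwoSidedIdeal X, M.IsMaxMod →
      (centerSet X ⊆ (M : Set X) ∨
        (¬ centerSet X ⊆ (M : Set X) ∧ ∃ N : TwoSidedIdeal X, N.IsMaxMod ∧ N ≠ M ∧
          (M : Set X) ∩ centerSet X = (N : Set X) ∩ centerSet X)) →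
      (S : Set X) ⊆ (M : Set X) := by
  -- the center of S (as an algebra) maps into the center of X
  have center_coe : ∀ z : S, z ∈ centerSet ↥S → (z : X) ∈ centerSet X := by
    intro z hz x
    obtain ⟨ι, l, e, hne, heS, hconv⟩ := happrox
    have hzs : ∀ w ∈ S, (z : X) * w = w * z := by
      intro w hw
      have := hz ⟨w, hw⟩
      exact congrArg Subtype.val this
    have h1 : Filter.Tendsto (fun i => (z : X) * x * e i) l (nhds ((z : X) * x)) :=
      (hconv _ (hright x z z.2)).2
    have h2 : Filter.Tendsto (fun i => (z : X) * x * e i) l (nhds (x * z)) := by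
      have heq : (fun i => (z : X) * x * e i) = fun i => x * (e i * z) := by
        funext i
        rw [mul_assoc, hzs (x * e i) (hleft x (e i) (heS i)), mul_assoc]
      rw [heq]
      exact Filter.Tendsto.const_mul x (hconv _ z.2).1
    exact tendsto_nhds_unique h1 h2
  intro M hM hcase
  by_contra hS'
  have hMmax' := restrIdeal_isMaxMod S hleft hright M hM hS'
  rcases hcase with hZ | ⟨_, N, hN, hNM, heq⟩
  · exact hwc.1 _ hMmax' fun z hz => (mem_restrIdeal S).2 (hZ (center_coe z hz))
  · by_cases hSN : (S : Set X) ⊆ (N : Set X)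
    · refine hwc.1 _ hMmax' fun z hz => ?_
      have h1 : (z : X) ∈ (N : Set X) ∩ centerSet X := ⟨hSN z.2, center_coe z hz⟩
      rw [← heq] at h1
      exact (mem_restrIdeal S).2 h1.1
    · have hNmax' := restrIdeal_isMaxMod S hleft hright N hN hSN
      have hres : restrIdeal S M = restrIdeal S N := by
        refine hwc.2 _ _ hMmax' hNmax' ?_
        ext z
        constructor
        · rintro ⟨hm, hc⟩
          have h1 : (z : X) ∈ (M : Set X) ∩ centerSet X :=
            ⟨(mem_restrIdeal S).1 hm, center_coe z hc⟩
          rw [heq] at h1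
          exact ⟨(mem_restrIdeal S).2 h1.1, hc⟩
        · rintro ⟨hn, hc⟩
          have h1 : (z : X) ∈ (N : Set X) ∩ centerSet X :=
            ⟨(mem_restrIdeal S).1 hn, center_coe z hc⟩
          rw [← heq] at h1
          exact ⟨(mem_restrIdeal S).2 h1.1, hc⟩
      have hMN : ∀ x : X, x ∈ S → (x ∈ N → x ∈ M) := by
        intro x hx hxN
        have : (⟨x, hx⟩ : S) ∈ restrIdeal S N := (mem_restrIdeal S).2 hxN
        rw [← hres] at this
        exact (mem_restrIdeal S).1 this
      obtain ⟨s₀, hs₀S, hs₀⟩ := exists_unit_in_S S hleft hright M hM hS'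
      have hNleM : N ≤ M := by
        intro n hn
        have h1 : n * s₀ ∈ M :=
          hMN (n * s₀) (hleft n s₀ hs₀S) (N.mul_mem_right n s₀ hn)
        have h2 : n = n * s₀ - (n * s₀ - n) := by noncomm_ring
        have h3 := M.sub_mem h1 (hs₀ n).1
        rwa [← h2] at h3
      exact hNM (hN.2.2 M hNleM hM.2.1).symm
end
end
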